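/- Let b_0, b_1, ..., b_5 be complex numbers with b_1 b_2 b_3 b_4 b_5 ≠ 0. The quintic polynomial W = b_1 x_1^5 + b_2 x_2^5 + b_3 x_3^5 + b_4 x_4^5 + b_5 x_5^5 + b_0 x_1 x_2 x_3 x_4 x_5 has a critical point (a point where all five partial derivatives ∂W/∂x_i vanish) with all coordinates x_i nonzero in ℂ^5 if and only if b_0^5 + 5^5 b_1 b_2 b_3 b_4 b_5 = 0. -/

import Mathlib

/-!
Multiplying `∂W/∂xᵢ` by `xᵢ` turns the critical equations on the torus into
`m bᵢ xᵢᵐ = -b₀ P` with `P = ∏ xⱼ` and `m` the number of variables. Taking the product over `i`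
gives `mᵐ (∏ bᵢ) Pᵐ = (-b₀)ᵐ Pᵐ`, and `P ≠ 0` can be cancelled. Conversely, pick `yᵢ` with
`bᵢ yᵢᵐ = 1`; the relation makes `ω = -b₀ (∏ yⱼ) / m` an `m`-th root of unity, and dividing one
coordinate of `y` by `ω` produces a critical point.
-/

open Finset

variable {K ι : Type*} [Field K] [Fintype ι]

/-- `x` lies on the torus and `xᵢ ∂W/∂xᵢ (x) = 0` for all `i`, where
`W = ∑ bᵢ xᵢᵐ + b₀ ∏ xᵢ` and `m` is the number of variables; on the torus this is the same as
`x` being a critical point of `W`. -/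
def IsTorusCritical (b₀ : K) (b x : ι → K) : Prop :=
  (∀ i, x i ≠ 0) ∧ ∀ i, Fintype.card ι * b i * x i ^ Fintype.card ι + b₀ * ∏ j, x j = 0

theorem IsTorusCritical.neg_pow_card_eq {b₀ : K} {b x : ι → K} (hx : IsTorusCritical b₀ b x) :
    (-b₀) ^ Fintype.card ι = Fintype.card ι ^ Fintype.card ι * ∏ i, b i := by
  set m := Fintype.card ι
  have hP : (∏ j, x j) ^ m ≠ 0 := pow_ne_zero _ (prod_ne_zero_iff.2 fun i _ => hx.1 i)
  have hprod : ∏ i, ((m : K) * b i * x i ^ m) = ∏ _i : ι, (-b₀ * ∏ j, x j) :=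
    prod_congr rfl fun i _ => eq_neg_of_add_eq_zero_left (hx.2 i) |>.trans (neg_mul _ _).symm
  rw [prod_mul_distrib, prod_mul_distrib, prod_const, prod_pow, prod_const, card_univ,
    mul_pow] at hprod
  exact (mul_right_cancel₀ hP hprod).symm

theorem exists_isTorusCritical [IsAlgClosed K] (hm : (Fintype.card ι : K) ≠ 0) {b₀ : K} {b : ι → K}
    (hb : ∀ i, b i ≠ 0) (h : (-b₀) ^ Fintype.card ι = Fintype.card ι ^ Fintype.card ι * ∏ i, b i) :
    ∃ x, IsTorusCritical b₀ b x := by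
  classical
  set m := Fintype.card ι
  have hm0 : 0 < m := Nat.pos_of_ne_zero fun h0 => hm (by simp [m, h0])
  obtain ⟨i₀⟩ : Nonempty ι := Fintype.card_pos_iff.1 hm0
  choose y hy using fun i => IsAlgClosed.exists_pow_nat_eq (b i)⁻¹ hm0
  have hby : ∀ i, b i * y i ^ m = 1 := fun i => by rw [hy, mul_inv_cancel₀ (hb i)]
  have hy0 : ∀ i, y i ≠ 0 := fun i h0 => by simpa [h0, hm0.ne'] using hby i
  set ω := -b₀ * (∏ j, y j) / m
  have hω : ω ^ m = 1 := by
    calc ω ^ m = ((-b₀) ^ m * ∏ j, y j ^ m) / (m : K) ^ m := by rw [div_pow, mul_pow, ← prod_pow]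
      _ = ∏ j, (b j * y j ^ m) := by
        rw [h, prod_mul_distrib, mul_assoc, mul_div_cancel_left₀ _ (pow_ne_zero _ hm)]
      _ = 1 := by simp [hby]
  have hω0 : ω ≠ 0 := by rintro h0; simp [h0, hm0.ne'] at hω
  set s : ι → K := Pi.mulSingle i₀ ω⁻¹
  have hs : ∀ i, s i ^ m = 1 := fun i => by
    rw [← Pi.pow_apply, ← Pi.mulSingle_pow, inv_pow, hω, inv_one, Pi.mulSingle_one, Pi.one_apply]
  have hs0 : ∀ i, s i ≠ 0 := fun i h0 => by simpa [h0, hm0.ne'] using hs i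
  have hbω : b₀ * ∏ j, y j = -m * ω := by simp only [ω]; field_simp
  refine ⟨fun i => y i * s i, fun i => mul_ne_zero (hy0 i) (hs0 i), fun i => ?_⟩
  rw [prod_mul_distrib, prod_pi_mulSingle', if_pos (mem_univ _), ← mul_assoc, hbω, mul_pow, hs,
    mul_one, mul_assoc, hby]
  field_simp
  ring

theorem exists_isTorusCritical_iff [IsAlgClosed K] (hm : (Fintype.card ι : K) ≠ 0) {b₀ : K}
    {b : ι → K} (hb : ∀ i, b i ≠ 0) :
    (∃ x, IsTorusCritical b₀ b x) ↔
      (-b₀) ^ Fintype.card ι = Fintype.card ι ^ Fintype.card ι * ∏ i, b i :=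
  ⟨fun ⟨_, hx⟩ => hx.neg_pow_card_eq, exists_isTorusCritical hm hb⟩

theorem exists_isTorusCritical_fin_five_iff (b0 b1 b2 b3 b4 b5 : K) :
    (∃ x : Fin 5 → K, IsTorusCritical b0 ![b1, b2, b3, b4, b5] x) ↔
      ∃ x1 x2 x3 x4 x5 : K,
        x1 ≠ 0 ∧ x2 ≠ 0 ∧ x3 ≠ 0 ∧ x4 ≠ 0 ∧ x5 ≠ 0 ∧
        5 * b1 * x1 ^ 4 + b0 * (x2 * x3 * x4 * x5) = 0 ∧
        5 * b2 * x2 ^ 4 + b0 * (x1 * x3 * x4 * x5) = 0 ∧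
        5 * b3 * x3 ^ 4 + b0 * (x1 * x2 * x4 * x5) = 0 ∧
        5 * b4 * x4 ^ 4 + b0 * (x1 * x2 * x3 * x5) = 0 ∧
        5 * b5 * x5 ^ 4 + b0 * (x1 * x2 * x3 * x4) = 0 := by
  constructor
  · rintro ⟨x, hx0, hx⟩
    simp only [Nat.succ_eq_add_one, Nat.reduceAdd, ne_eq, Fin.forall_fin_succ, Fin.isValue,
      Fin.succ_zero_eq_one, Fin.succ_one_eq_two, Fin.reduceSucc, IsEmpty.forall_iff, and_true,
      zero_add, Fintype.card_fin, Nat.cast_ofNat, Fin.prod_univ_five, Matrix.cons_val_zero,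
      Matrix.cons_val_succ, Matrix.cons_val_fin_one] at hx0 hx
    obtain ⟨hx1, hx2, hx3, hx4, hx5⟩ := hx0
    obtain ⟨e1, e2, e3, e4, e5⟩ := hx
    exact ⟨_, _, _, _, _, hx1, hx2, hx3, hx4, hx5,
      mul_left_cancel₀ hx1 (by linear_combination e1),
      mul_left_cancel₀ hx2 (by linear_combination e2),
      mul_left_cancel₀ hx3 (by linear_combination e3),
      mul_left_cancel₀ hx4 (by linear_combination e4),
      mul_left_cancel₀ hx5 (by linear_combination e5)⟩
  · rintro ⟨x1, x2, x3, x4, x5, hx1, hx2, hx3, hx4, hx5, h1, h2, h3, h4, h5⟩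
    refine ⟨![x1, x2, x3, x4, x5], ?_, ?_⟩
    · simp [Fin.forall_fin_succ, *]
    · simp only [Fintype.card_fin, Fin.prod_univ_five, Fin.isValue, Matrix.cons_val_zero,
        Matrix.cons_val_one, Matrix.cons_val, Fin.forall_fin_succ, Matrix.cons_val_succ,
        Matrix.cons_val_fin_one, forall_const]
      exact ⟨by linear_combination x1 * h1, by linear_combination x2 * h2,
        by linear_combination x3 * h3, by linear_combination x4 * h4, by linear_combination x5 * h5⟩

/-- The quintic `W = b₁x₁⁵ + ⋯ + b₅x₅⁵ + b₀x₁x₂x₃x₄x₅` has a critical point with all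
coordinates nonzero iff `b₀⁵ + 5⁵ b₁b₂b₃b₄b₅ = 0`. -/
theorem stmt_2 (b0 b1 b2 b3 b4 b5 : ℂ) (h : b1 * b2 * b3 * b4 * b5 ≠ 0) :
    (∃ x1 x2 x3 x4 x5 : ℂ,
      x1 ≠ 0 ∧ x2 ≠ 0 ∧ x3 ≠ 0 ∧ x4 ≠ 0 ∧ x5 ≠ 0 ∧
      5 * b1 * x1 ^ 4 + b0 * (x2 * x3 * x4 * x5) = 0 ∧
      5 * b2 * x2 ^ 4 + b0 * (x1 * x3 * x4 * x5) = 0 ∧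
      5 * b3 * x3 ^ 4 + b0 * (x1 * x2 * x4 * x5) = 0 ∧
      5 * b4 * x4 ^ 4 + b0 * (x1 * x2 * x3 * x5) = 0 ∧
      5 * b5 * x5 ^ 4 + b0 * (x1 * x2 * x3 * x4) = 0) ↔
    b0 ^ 5 + 5 ^ 5 * (b1 * b2 * b3 * b4 * b5) = 0 := by
  have hb : ∀ i : Fin 5, ![b1, b2, b3, b4, b5] i ≠ 0 := by
    simp only [mul_ne_zero_iff] at h
    simp [Fin.forall_fin_succ, h]
  rw [← exists_isTorusCritical_fin_five_iff, exists_isTorusCritical_iff (by norm_num) hb]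
  simp only [Fintype.card_fin, Nat.cast_ofNat, Fin.prod_univ_five, Matrix.cons_val_zero,
    Matrix.cons_val_one, Matrix.cons_val]
  rw [Odd.neg_pow (by decide), neg_eq_iff_add_eq_zero]
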